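/- Let σ ∈ ℂ with Re σ > 0, f₀ ∈ C⁰(ℝ/2πℤ; ℂ), and f given in polar coordinates by f(r,θ) = r^σ f₀(θ). Suppose μ(σ+1−λ) ∈ ℤ and that the compatibility condition ∫₀^{2π} (f₀(s)/p(s)) e^{−i(σ+1−λ)ψ(s)} ds = 0 holds. Then the function v(θ) = [∫₀^θ (f₀(s)/p(s)) e^{−i(σ+1−λ)ψ(s)} ds]·e^{i(σ+1−λ)ψ(θ)} is a 2π-periodic C¹ solution of p v′ − i(σ+1−λ) q v = f₀, and the function u given in polar coordinates by u(r,θ) = r^{σ+1−λ} v(θ) satisfies Lu = f pointwise on ℝ²∖{0}. -/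

import Mathlib

open Real Complex Set

/-!
On the circle, `p v' - i c q v = f₀` with `c = σ + 1 - λ` is solved by variation of constants,
`v = (∫₀^θ (f₀/p) e^{-icψ}) e^{icψ}`. Since `ψ (θ + 2π) = ψ θ + 2πμ`, the resonance condition
`μc ∈ ℤ` makes `e^{± icψ}` 2π-periodic, and the compatibility condition then makes the primitive
periodic too.

In polar coordinates `L = r^{λ-1} (p ∂_θ - i q r ∂_r)`, hence
`L (r^c v) = r^{λ+c-1} (p v' - i c q v) = r^σ f₀`. The two directional derivatives of `u` are read
off along the ray and the circle through the point, once `u` is known to be differentiable there;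
that follows by writing `u` near `r e^{iθ}` through the smooth local branch `θ + arg (w / r e^{iθ})`
of the argument.
-/

section PeriodicPrimitive

variable {E : Type*} [NormedAddCommGroup E] [NormedSpace ℝ E] [CompleteSpace E] {T : ℝ}
  {g : ℝ → E}

theorem Function.Periodic.add_period_eq_add_integral (hg : Function.Periodic g T)
    (hgc : Continuous g) {ψ : ℝ → E} (hψ : ∀ θ, HasDerivAt ψ (g θ) θ) (θ : ℝ) :
    ψ (θ + T) = ψ θ + ∫ s in (0:ℝ)..T, g s := by
  have h := intervalIntegral.integral_eq_sub_of_hasDerivAt (fun x _ => hψ x)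
    (hgc.intervalIntegrable θ (θ + T))
  rw [hg.intervalIntegral_add_eq θ 0, zero_add] at h
  rw [h, add_sub_cancel]

omit [CompleteSpace E] in
theorem Function.Periodic.primitive_of_integral_eq_zero (hg : Function.Periodic g T)
    (hgc : Continuous g) (h0 : ∫ s in (0:ℝ)..T, g s = 0) :
    Function.Periodic (fun θ => ∫ s in (0:ℝ)..θ, g s) T := fun θ => by
  simp only [hg.intervalIntegral_add_eq_add 0 θ fun _ _ => hgc.intervalIntegrable _ _, zero_add,
    h0, add_zero]

end PeriodicPrimitive

theorem Function.Periodic.cexp_mul_of_hasDerivAt {T : ℝ} {g ψ : ℝ → ℂ}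
    (hg : Function.Periodic g T) (hgc : Continuous g) (hψ : ∀ θ, HasDerivAt ψ (g θ) θ)
    {κ : ℂ} {k : ℤ} (hk : κ * ∫ s in (0:ℝ)..T, g s = k * (2 * π * I)) :
    Function.Periodic (fun θ => exp (κ * ψ θ)) T := fun θ => by
  dsimp only
  rw [hg.add_period_eq_add_integral hgc hψ, mul_add, hk, Complex.exp_add,
    exp_int_mul_two_pi_mul_I, mul_one]

noncomputable def angularSolution (p ψ f₀ : ℝ → ℂ) (c : ℂ) (θ : ℝ) : ℂ :=
  (∫ s in (0:ℝ)..θ, f₀ s / p s * exp (-(I * c) * ψ s)) * exp (I * c * ψ θ)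

section AngularSolution

variable {p q ψ f₀ : ℝ → ℂ} {c : ℂ} (hp : Continuous p) (hp0 : ∀ θ, p θ ≠ 0)
  (hf₀ : Continuous f₀) (hψ : ∀ θ, HasDerivAt ψ (q θ / p θ) θ)
include hp hp0 hf₀ hψ

theorem continuous_angularIntegrand :
    Continuous fun s => f₀ s / p s * exp (-(I * c) * ψ s) :=
  (hf₀.div hp hp0).mul
    (continuous_const.mul (Differentiable.continuous fun θ => (hψ θ).differentiableAt)).cexp

theorem hasDerivAt_angularSolution (θ : ℝ) :
    HasDerivAt (angularSolution p ψ f₀ c)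
      (f₀ θ / p θ + I * c * (q θ / p θ) * angularSolution p ψ f₀ c θ) θ := by
  have hF := ((continuous_angularIntegrand (c := c) hp hp0 hf₀ hψ).integral_hasStrictDerivAt
    0 θ).hasDerivAt
  refine (hF.mul ((hψ θ).const_mul (I * c)).cexp).congr_deriv ?_
  rw [mul_assoc (f₀ θ / p θ), ← Complex.exp_add, neg_mul, neg_add_cancel, Complex.exp_zero,
    angularSolution]
  ring

theorem angularSolution_ode (θ : ℝ) :
    p θ * deriv (angularSolution p ψ f₀ c) θ - I * c * q θ * angularSolution p ψ f₀ c θ =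
      f₀ θ := by
  rw [(hasDerivAt_angularSolution hp hp0 hf₀ hψ θ).deriv]
  field_simp [hp0 θ]
  ring

theorem contDiff_angularSolution (hq : Continuous q) :
    ContDiff ℝ 1 (angularSolution p ψ f₀ c) := by
  have hd := hasDerivAt_angularSolution (c := c) hp hp0 hf₀ hψ
  have hv : Continuous (angularSolution p ψ f₀ c) :=
    continuous_iff_continuousAt.2 fun θ => (hd θ).continuousAt
  rw [contDiff_one_iff_deriv, funext fun θ => (hd θ).deriv]
  exact ⟨fun θ => (hd θ).differentiableAt,
    (hf₀.div hp hp0).add ((continuous_const.mul (hq.div hp hp0)).mul hv)⟩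

theorem Function.Periodic.angularSolution {T : ℝ} (hq : Continuous q)
    (hpT : Function.Periodic p T) (hqT : Function.Periodic q T) (hf₀T : Function.Periodic f₀ T)
    {k : ℤ} (hk : I * c * ∫ s in (0:ℝ)..T, q s / p s = k * (2 * π * I))
    (hcompat : ∫ s in (0:ℝ)..T, f₀ s / p s * exp (-(I * c) * ψ s) = 0) :
    Function.Periodic (angularSolution p ψ f₀ c) T := by
  have hqpT := hqT.div hpT
  have hqpc := hq.div hp hp0
  have hk' : -(I * c) * ∫ s in (0:ℝ)..T, q s / p s = (-k : ℤ) * (2 * π * I) := by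
    rw [neg_mul, hk]; push_cast; ring
  have hintT := (hf₀T.div hpT).mul (hqpT.cexp_mul_of_hasDerivAt hqpc hψ hk')
  exact (hintT.primitive_of_integral_eq_zero
    (continuous_angularIntegrand hp hp0 hf₀ hψ) hcompat).mul
    (hqpT.cexp_mul_of_hasDerivAt hqpc hψ hk)

end AngularSolution

theorem exists_polar_eq {z : ℝ × ℝ} (hz : z ≠ 0) :
    ∃ r θ : ℝ, 0 < r ∧ (r * Real.cos θ, r * Real.sin θ) = z := by
  set w : ℂ := equivRealProdCLM.symm z
  have hw : w ≠ 0 := by simpa [w] using hz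
  exact ⟨‖w‖, arg w, norm_pos_iff.2 hw,
    Prod.ext (by simp [norm_mul_cos_arg, w]) (by simp [norm_mul_sin_arg, w])⟩

theorem norm_mul_exp_add_arg_div {r θ : ℝ} (hr : 0 < r) (w' : ℂ) :
    (‖w'‖ : ℂ) * exp ((θ + arg (w' / (r * exp (θ * I))) : ℝ) * I) = w' := by
  set w : ℂ := r * exp (θ * I)
  have hw : w ≠ 0 := mul_ne_zero (ofReal_ne_zero.2 hr.ne') (exp_ne_zero _)
  have hnorm : ‖w‖ = r := by simp [w, hr.le]
  calc (‖w'‖ : ℂ) * exp ((θ + arg (w' / w) : ℝ) * I)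
      = (r * exp (θ * I)) * (‖w' / w‖ * exp (arg (w' / w) * I)) := by
        have hr' : (r : ℂ) ≠ 0 := ofReal_ne_zero.2 hr.ne'
        rw [norm_div, hnorm, ofReal_add, add_mul, Complex.exp_add, ofReal_div]
        field_simp
    _ = w' := by rw [norm_mul_exp_arg_mul_I]; exact mul_div_cancel₀ _ hw

section Polar

variable {E : Type*} [NormedAddCommGroup E] [NormedSpace ℝ E]

theorem differentiableAt_of_comp_polar {u G : ℝ × ℝ → E}
    (hu : ∀ r θ : ℝ, 0 < r → u (r * Real.cos θ, r * Real.sin θ) = G (r, θ)) {r θ : ℝ}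
    (hr : 0 < r) (hG : DifferentiableAt ℝ G (r, θ)) :
    DifferentiableAt ℝ u (r * Real.cos θ, r * Real.sin θ) := by
  set z₀ : ℝ × ℝ := (r * Real.cos θ, r * Real.sin θ)
  set w : ℂ := r * exp (θ * I)
  set g : ℝ × ℝ → ℝ × ℝ := fun z =>
    (‖equivRealProdCLM.symm z‖, θ + (log (equivRealProdCLM.symm z / w)).im)
  have hw : equivRealProdCLM.symm z₀ = w := by
    apply Complex.ext <;> simp [z₀, w, exp_ofReal_mul_I_re, exp_ofReal_mul_I_im]
  have hw0 : w ≠ 0 := mul_ne_zero (ofReal_ne_zero.2 hr.ne') (exp_ne_zero _)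
  have hgz₀ : g z₀ = (r, θ) := by
    simp [g, hw, hw0, w, hr.le]
  have hg : DifferentiableAt ℝ g z₀ := by
    refine DifferentiableAt.prodMk ?_ ?_
    · exact equivRealProdCLM.symm.differentiableAt.norm ℝ (hw ▸ hw0)
    · have hlog : DifferentiableAt ℝ (fun z => log (equivRealProdCLM.symm z / w)) z₀ :=
        (hasStrictFDerivAt_log_real (by simp [hw, hw0])).differentiableAt.comp z₀
          (by fun_prop)
      exact (differentiableAt_const θ).add (imCLM.differentiableAt.comp z₀ hlog)
  have heq : u =ᶠ[nhds z₀] G ∘ g := by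
    have hz₀ : z₀ ≠ 0 := fun h => hw0 (by rw [← hw, h, map_zero])
    filter_upwards [isOpen_ne.mem_nhds hz₀] with z hz
    have hwz : equivRealProdCLM.symm z ≠ 0 := by simpa using hz
    have hpol := norm_mul_exp_add_arg_div (θ := θ) hr (equivRealProdCLM.symm z)
    rw [Function.comp_apply, ← hu _ _ (norm_pos_iff.2 hwz)]
    congr 1
    refine Prod.ext ?_ ?_
    · have := congrArg re hpol
      simp only [re_ofReal_mul, exp_ofReal_mul_I_re] at this
      simpa [log_im] using this.symm
    · have := congrArg im hpol
      simp only [im_ofReal_mul, exp_ofReal_mul_I_im] at this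
      simpa [log_im] using this.symm
  exact ((hgz₀ ▸ hG).comp z₀ hg).congr_of_eventuallyEq heq

theorem DifferentiableAt.hasDerivAt_radial {u : ℝ × ℝ → E} {r θ : ℝ}
    (hu : DifferentiableAt ℝ u (r * Real.cos θ, r * Real.sin θ)) :
    HasDerivAt (fun t => u (t * Real.cos θ, t * Real.sin θ))
      (fderiv ℝ u (r * Real.cos θ, r * Real.sin θ) (Real.cos θ, Real.sin θ)) r := by
  have hγ : HasDerivAt (fun t : ℝ => (t * Real.cos θ, t * Real.sin θ))
      (Real.cos θ, Real.sin θ) r := by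
    simpa using ((hasDerivAt_id r).mul_const (Real.cos θ)).prodMk
      ((hasDerivAt_id r).mul_const (Real.sin θ))
  exact hu.hasFDerivAt.comp_hasDerivAt r hγ

theorem DifferentiableAt.hasDerivAt_angular {u : ℝ × ℝ → E} {r θ : ℝ}
    (hu : DifferentiableAt ℝ u (r * Real.cos θ, r * Real.sin θ)) :
    HasDerivAt (fun φ => u (r * Real.cos φ, r * Real.sin φ))
      (fderiv ℝ u (r * Real.cos θ, r * Real.sin θ) (-(r * Real.sin θ), r * Real.cos θ)) θ := by
  have hγ : HasDerivAt (fun φ : ℝ => (r * Real.cos φ, r * Real.sin φ))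
      (-(r * Real.sin θ), r * Real.cos θ) θ := by
    simpa using ((Real.hasDerivAt_cos θ).const_mul r).prodMk
      ((Real.hasDerivAt_sin θ).const_mul r)
  exact hu.hasFDerivAt.comp_hasDerivAt θ hγ

end Polar

theorem ContinuousOn.comp_cos_sin {X : Type*} [TopologicalSpace X] {A : ℝ × ℝ → X}
    (hA : ContinuousOn A {z | z ≠ 0}) : Continuous fun θ => A (Real.cos θ, Real.sin θ) :=
  hA.comp_continuous (by fun_prop) fun θ h => by
    obtain ⟨hc, hs⟩ := Prod.mk_eq_zero.1 h
    simpa [hc, hs] using Real.cos_sq_add_sin_sq θ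

theorem ContinuousLinearMap.apply_cartesian_eq_polar (D : ℝ × ℝ →L[ℝ] ℂ) (α β : ℂ) {r : ℝ}
    (hr : r ≠ 0) (θ : ℝ) :
    α * D (1, 0) + β * D (0, 1) =
      (α * Real.cos θ + β * Real.sin θ) * D (Real.cos θ, Real.sin θ) +
        (β * Real.cos θ - α * Real.sin θ) / r * D (-(r * Real.sin θ), r * Real.cos θ) := by
  have hrad : D (Real.cos θ, Real.sin θ) =
      Real.cos θ * D (1, 0) + Real.sin θ * D (0, 1) := by
    rw [← real_smul, ← real_smul, ← map_smul, ← map_smul, ← map_add]; simp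
  have hang : D (-(r * Real.sin θ), r * Real.cos θ) =
      -(r * Real.sin θ) * D (1, 0) + r * Real.cos θ * D (0, 1) := by
    rw [← ofReal_mul, ← ofReal_neg, ← ofReal_mul, ← real_smul, ← real_smul, ← map_smul,
      ← map_smul, ← map_add]
    simp
  have hpyth : (Real.cos θ : ℂ) ^ 2 + (Real.sin θ : ℂ) ^ 2 = 1 := by
    exact_mod_cast Real.cos_sq_add_sin_sq θ
  have hr' : (r : ℂ) ≠ 0 := ofReal_ne_zero.2 hr
  rw [hrad, hang]
  field_simp
  linear_combination (-(α * D (1, 0) + β * D (0, 1))) * hpyth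

theorem ofReal_cpow_eq_exp_mul_log {r : ℝ} (hr : 0 < r) (s : ℂ) :
    (r : ℂ) ^ s = exp (s * Real.log r) := by
  rw [cpow_def_of_ne_zero (ofReal_ne_zero.2 hr.ne'), ofReal_log hr.le, mul_comm]

theorem hasDerivAt_cexp_mul_log {r : ℝ} (hr : 0 < r) (c : ℂ) :
    HasDerivAt (fun t : ℝ => exp (c * Real.log t)) (exp (c * Real.log r) * (c / r)) r := by
  simpa [div_eq_mul_inv] using ((Real.hasDerivAt_log hr.ne').ofReal_comp.const_mul c).cexp

theorem vectorField_apply_of_polar {A B u : ℝ × ℝ → ℂ} {lam c : ℂ} {v : ℝ → ℂ}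
    (hAh : ∀ t : ℝ, 0 < t → ∀ z : ℝ × ℝ, A (t • z) = (t : ℂ) ^ lam * A z)
    (hBh : ∀ t : ℝ, 0 < t → ∀ z : ℝ × ℝ, B (t • z) = (t : ℂ) ^ lam * B z)
    (hv : Differentiable ℝ v)
    (hu : ∀ r θ : ℝ, 0 < r →
      u (r * Real.cos θ, r * Real.sin θ) = exp (c * Real.log r) * v θ)
    {r : ℝ} (hr : 0 < r) (θ : ℝ) :
    A (r * Real.cos θ, r * Real.sin θ) * fderiv ℝ u (r * Real.cos θ, r * Real.sin θ) (1, 0) +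
      B (r * Real.cos θ, r * Real.sin θ) * fderiv ℝ u (r * Real.cos θ, r * Real.sin θ) (0, 1) =
    exp ((lam + c - 1) * Real.log r) *
      ((B (Real.cos θ, Real.sin θ) * Real.cos θ - A (Real.cos θ, Real.sin θ) * Real.sin θ) *
          deriv v θ +
        c * (A (Real.cos θ, Real.sin θ) * Real.cos θ + B (Real.cos θ, Real.sin θ) * Real.sin θ) *
          v θ) := by
  set z : ℝ × ℝ := (r * Real.cos θ, r * Real.sin θ)
  have hdiff : DifferentiableAt ℝ u z :=
    differentiableAt_of_comp_polar (G := fun x => exp (c * Real.log x.1) * v x.2) hu hr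
      (by fun_prop (disch := exact hr.ne'))
  have hrad : fderiv ℝ u z (Real.cos θ, Real.sin θ) =
      exp (c * Real.log r) * (c / r) * v θ := by
    refine hdiff.hasDerivAt_radial.unique ?_
    refine ((hasDerivAt_cexp_mul_log hr c).mul_const (v θ)).congr_of_eventuallyEq ?_
    filter_upwards [lt_mem_nhds hr] with t ht using hu t θ ht
  have hang : fderiv ℝ u z (-(r * Real.sin θ), r * Real.cos θ) =
      exp (c * Real.log r) * deriv v θ := by
    refine hdiff.hasDerivAt_angular.unique ?_
    simpa only [hu r _ hr] using ((hv θ).hasDerivAt.const_mul (exp (c * Real.log r)))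
  have hz : z = r • (Real.cos θ, Real.sin θ) := by simp [z]
  have hr' : (r : ℂ) ≠ 0 := ofReal_ne_zero.2 hr.ne'
  have hexp : exp ((lam + c - 1) * Real.log r) =
      exp (lam * Real.log r) * exp (c * Real.log r) / r := by
    rw [eq_div_iff hr', ← Complex.exp_log hr', ← ofReal_log hr.le, ← Complex.exp_add,
      ← Complex.exp_add]
    ring_nf
  rw [(fderiv ℝ u z).apply_cartesian_eq_polar _ _ hr.ne' θ, hrad, hang, hz, hAh r hr, hBh r hr,
    ofReal_cpow_eq_exp_mul_log hr, hexp]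
  field_simp
  ring

theorem stmt_11_general
    (A B : ℝ × ℝ → ℂ) (lam : ℂ)
    (hA : ContDiffOn ℝ (⊤ : ℕ∞) A {z : ℝ × ℝ | z ≠ 0})
    (hB : ContDiffOn ℝ (⊤ : ℕ∞) B {z : ℝ × ℝ | z ≠ 0})
    (hAh : ∀ t : ℝ, 0 < t → ∀ z : ℝ × ℝ, A (t • z) = (t : ℂ) ^ lam * A z)
    (hBh : ∀ t : ℝ, 0 < t → ∀ z : ℝ × ℝ, B (t • z) = (t : ℂ) ^ lam * B z)
    (a b p q : ℝ → ℂ)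
    (ha : ∀ θ : ℝ, a θ = A (Real.cos θ, Real.sin θ))
    (hb : ∀ θ : ℝ, b θ = B (Real.cos θ, Real.sin θ))
    (hpdef : ∀ θ : ℝ, p θ = b θ * (Real.cos θ : ℂ) - a θ * (Real.sin θ : ℂ))
    (hqdef : ∀ θ : ℝ, q θ = Complex.I * (a θ * (Real.cos θ : ℂ) + b θ * (Real.sin θ : ℂ)))
    (hC2 : ∀ θ : ℝ, p θ ≠ 0)
    (mu : ℂ)
    (hmudef : mu = (1 / (2 * Real.pi)) * ∫ θ in (0:ℝ)..(2 * Real.pi), q θ / p θ)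
    (psi : ℝ → ℂ)
    (hpsider : ∀ θ : ℝ, HasDerivAt psi (q θ / p θ) θ)
    (sig : ℂ)
    (f₀ : ℝ → ℂ) (hf₀ : Continuous f₀) (hf₀per : Function.Periodic f₀ (2 * Real.pi))
    (f : ℝ × ℝ → ℂ)
    (hf : ∀ r θ : ℝ, 0 < r → f (r * Real.cos θ, r * Real.sin θ) =
      Complex.exp (sig * (Real.log r : ℂ)) * f₀ θ)
    (hres : ∃ k : ℤ, mu * (sig + 1 - lam) = (k : ℂ))
    (hcompat : (∫ s in (0:ℝ)..(2 * Real.pi),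
      f₀ s / p s * Complex.exp (-(Complex.I * (sig + 1 - lam)) * psi s)) = 0)
    (v : ℝ → ℂ)
    (hv : ∀ θ : ℝ, v θ =
      (∫ s in (0:ℝ)..θ, f₀ s / p s * Complex.exp (-(Complex.I * (sig + 1 - lam)) * psi s)) *
        Complex.exp (Complex.I * (sig + 1 - lam) * psi θ))
    (u : ℝ × ℝ → ℂ)
    (hu : ∀ r θ : ℝ, 0 < r → u (r * Real.cos θ, r * Real.sin θ) =
      Complex.exp ((sig + 1 - lam) * (Real.log r : ℂ)) * v θ) :
    Function.Periodic v (2 * Real.pi) ∧ ContDiff ℝ 1 v ∧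
    (∀ θ : ℝ, p θ * deriv v θ - Complex.I * (sig + 1 - lam) * q θ * v θ = f₀ θ) ∧
    (∀ z : ℝ × ℝ, z ≠ 0 →
      A z * fderiv ℝ u z (1, 0) + B z * fderiv ℝ u z (0, 1) = f z) := by
  set c := sig + 1 - lam
  obtain rfl : v = angularSolution p psi f₀ c := funext hv
  have ha' : Continuous a := by rw [funext ha]; exact hA.continuousOn.comp_cos_sin
  have hb' : Continuous b := by rw [funext hb]; exact hB.continuousOn.comp_cos_sin
  have hp : Continuous p := by rw [funext hpdef]; fun_prop
  have hq : Continuous q := by rw [funext hqdef]; fun_prop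
  have hpT : Function.Periodic p (2 * π) := fun θ => by
    simp only [hpdef, ha, hb, Real.cos_add_two_pi, Real.sin_add_two_pi]
  have hqT : Function.Periodic q (2 * π) := fun θ => by
    simp only [hqdef, ha, hb, Real.cos_add_two_pi, Real.sin_add_two_pi]
  obtain ⟨k, hk⟩ := hres
  have hkI : I * c * ∫ s in (0:ℝ)..2 * π, q s / p s = k * (2 * π * I) := by
    have hπ : (2 * π : ℂ) ≠ 0 := by exact_mod_cast two_pi_pos.ne'
    rw [← hk, hmudef]
    field_simp
  have hv1 := contDiff_angularSolution (c := c) hp hC2 hf₀ hpsider hq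
  refine ⟨hpT.angularSolution hp hC2 hf₀ hpsider hq hqT hf₀per hkI hcompat, hv1,
    angularSolution_ode hp hC2 hf₀ hpsider, fun z hz => ?_⟩
  obtain ⟨r, θ, hr, rfl⟩ := exists_polar_eq hz
  rw [vectorField_apply_of_polar hAh hBh (hv1.differentiable one_ne_zero) hu hr θ, hf r θ hr,
    ← angularSolution_ode hp hC2 hf₀ hpsider θ, hpdef, hqdef, ha, hb,
    show lam + c - 1 = sig by ring]
  linear_combination (exp (sig * Real.log r) * c * (A (Real.cos θ, Real.sin θ) * Real.cos θ +
    B (Real.cos θ, Real.sin θ) * Real.sin θ) * angularSolution p psi f₀ c θ) * I_sq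

/-- Resonant case: if μ(σ+1−λ) ∈ ℤ and the compatibility condition
∫₀^{2π} (f₀/p) e^{−i(σ+1−λ)ψ} = 0 holds, then v(θ) = (∫₀^θ (f₀/p) e^{−i(σ+1−λ)ψ}) e^{i(σ+1−λ)ψ(θ)}
is a 2π-periodic C¹ solution of p v' − i(σ+1−λ) q v = f₀, and u = r^{σ+1−λ} v(θ)
solves Lu = f on ℝ²∖{0}. -/
theorem stmt_11
    (A B : ℝ × ℝ → ℂ) (lam : ℂ)
    (hA : ContDiffOn ℝ (⊤ : ℕ∞) A {z : ℝ × ℝ | z ≠ 0})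
    (hB : ContDiffOn ℝ (⊤ : ℕ∞) B {z : ℝ × ℝ | z ≠ 0})
    (hlam : 1 < lam.re)
    (hAh : ∀ t : ℝ, 0 < t → ∀ z : ℝ × ℝ, A (t • z) = (t : ℂ) ^ lam * A z)
    (hBh : ∀ t : ℝ, 0 < t → ∀ z : ℝ × ℝ, B (t • z) = (t : ℂ) ^ lam * B z)
    (a b p q : ℝ → ℂ)
    (ha : ∀ θ : ℝ, a θ = A (Real.cos θ, Real.sin θ))
    (hb : ∀ θ : ℝ, b θ = B (Real.cos θ, Real.sin θ))
    (hpdef : ∀ θ : ℝ, p θ = b θ * (Real.cos θ : ℂ) - a θ * (Real.sin θ : ℂ))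
    (hqdef : ∀ θ : ℝ, q θ = Complex.I * (a θ * (Real.cos θ : ℂ) + b θ * (Real.sin θ : ℂ)))
    (hC1 : interior {θ : ℝ | (q θ * (starRingEnd ℂ) (p θ)).re = 0} = ∅)
    (hC2 : ∀ θ : ℝ, p θ ≠ 0)
    (mu : ℂ)
    (hmudef : mu = (1 / (2 * Real.pi)) * ∫ θ in (0:ℝ)..(2 * Real.pi), q θ / p θ)
    (psi : ℝ → ℂ) (hpsi0 : psi 0 = 0)
    (hpsider : ∀ θ : ℝ, HasDerivAt psi (q θ / p θ) θ)
    (sig : ℂ) (hsig : 0 < sig.re)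
    (f₀ : ℝ → ℂ) (hf₀ : Continuous f₀) (hf₀per : Function.Periodic f₀ (2 * Real.pi))
    (f : ℝ × ℝ → ℂ)
    (hf : ∀ r θ : ℝ, 0 < r → f (r * Real.cos θ, r * Real.sin θ) =
      Complex.exp (sig * (Real.log r : ℂ)) * f₀ θ)
    (hres : ∃ k : ℤ, mu * (sig + 1 - lam) = (k : ℂ))
    (hcompat : (∫ s in (0:ℝ)..(2 * Real.pi),
      f₀ s / p s * Complex.exp (-(Complex.I * (sig + 1 - lam)) * psi s)) = 0)
    (v : ℝ → ℂ)
    (hv : ∀ θ : ℝ, v θ =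
      (∫ s in (0:ℝ)..θ, f₀ s / p s * Complex.exp (-(Complex.I * (sig + 1 - lam)) * psi s)) *
        Complex.exp (Complex.I * (sig + 1 - lam) * psi θ))
    (u : ℝ × ℝ → ℂ)
    (hu : ∀ r θ : ℝ, 0 < r → u (r * Real.cos θ, r * Real.sin θ) =
      Complex.exp ((sig + 1 - lam) * (Real.log r : ℂ)) * v θ) :
    Function.Periodic v (2 * Real.pi) ∧ ContDiff ℝ 1 v ∧
    (∀ θ : ℝ, p θ * deriv v θ - Complex.I * (sig + 1 - lam) * q θ * v θ = f₀ θ) ∧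
    (∀ z : ℝ × ℝ, z ≠ 0 →
      A z * fderiv ℝ u z (1, 0) + B z * fderiv ℝ u z (0, 1) = f z) :=
  stmt_11_general A B lam hA hB hAh hBh a b p q ha hb hpdef hqdef hC2 mu hmudef psi hpsider sig f₀
    hf₀ hf₀per f hf hres hcompat v hv u hu
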